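/- arXiv:hep-th/0612273 — 6 statements merged into one kernel-verified Lean document; each statement's English description precedes it below -/
import Mathlib

section
/- Let P : [0,∞) → ℝ be continuous with P(0) = k > 0, and let R be continuously differentiable on [0,∞), twice differentiable on (0,∞), satisfy r·(r R'(r))' = R(r)·P(r)² for all r > 0, with R(0) = 0 and R'(0) = q > 0. Then R'(r) > 0 for all r ≥ 0; in particular R is strictly monotonically increasing on (0,∞). -/
open Set

/-- For the flat-space cylindrically symmetric Yang–Mills
`R`-equation `r (r R')' = R P²` with a continuous source `P` satisfying
`P 0 = k > 0`, any solution `R` that is continuously differentiable on `[0,∞)`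
(with derivative `R'`), twice differentiable on `(0,∞)`, and satisfies
`R 0 = 0`, `R' 0 = q > 0`, has `R' > 0` everywhere on `[0,∞)`; in particular
`R` is strictly increasing on `(0,∞)`. -/
theorem stmt_0 (P R R' : ℝ → ℝ) (k q : ℝ)
    (hPcont : ContinuousOn P (Ici 0)) (hPk : P 0 = k) (hk : 0 < k)
    (hRderiv : ∀ r ∈ Ici (0 : ℝ), HasDerivWithinAt R (R' r) (Ici 0) r)
    (hR'cont : ContinuousOn R' (Ici 0))
    (hR'' : ∀ r > (0 : ℝ), DifferentiableAt ℝ (fun s => s * R' s) r)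
    (hode : ∀ r > (0 : ℝ), r * deriv (fun s => s * R' s) r = R r * (P r) ^ 2)
    (hR0 : R 0 = 0) (hq : R' 0 = q) (hq0 : 0 < q) :
    (∀ r ≥ (0 : ℝ), 0 < R' r) ∧ StrictMonoOn R (Ioi 0) := by
  have hRcont : ContinuousOn R (Ici 0) := fun r hr => (hRderiv r hr).continuousWithinAt
  have hderivR : ∀ r > (0:ℝ), HasDerivAt R (R' r) r := fun r hr =>
    (hRderiv r (le_of_lt hr)).hasDerivAt (Ici_mem_nhds hr)
  have key : ∀ r ≥ (0:ℝ), 0 < R' r := by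
    by_contra h
    push_neg at h
    obtain ⟨r₁, hr₁, hr₁'⟩ := h
    set S : Set ℝ := {r | 0 ≤ r ∧ R' r ≤ 0} with hS
    have hSne : S.Nonempty := ⟨r₁, hr₁, hr₁'⟩
    have hSbdd : BddBelow S := ⟨0, fun x hx => hx.1⟩
    have hSclosed : IsClosed S := by
      have hEq : S = Ici 0 ∩ R' ⁻¹' Iic 0 := by
        ext x; simp [hS, Set.mem_Ici, Set.mem_Iic]
      rw [hEq]
      exact hR'cont.preimage_isClosed_of_isClosed isClosed_Ici isClosed_Iic
    set r₀ := sInf S with hr₀def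
    have hr₀S : r₀ ∈ S := hSclosed.csInf_mem hSne hSbdd
    have hr₀nonneg : 0 ≤ r₀ := hr₀S.1
    have hr₀pos : 0 < r₀ := by
      rcases hr₀nonneg.lt_or_eq with h' | h'
      · exact h'
      · exfalso
        have h2 := hr₀S.2
        rw [← h', hq] at h2
        linarith
    have hpos : ∀ r, 0 ≤ r → r < r₀ → 0 < R' r := by
      intro r h0 hlt
      by_contra hc
      push_neg at hc
      exact absurd (csInf_le hSbdd ⟨h0, hc⟩) (not_le.2 hlt)
    have hRpos : ∀ r, 0 < r → r ≤ r₀ → 0 < R r := by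
      intro b hb hbr
      have hmono : StrictMonoOn R (Icc 0 r₀) := by
        apply strictMonoOn_of_deriv_pos (convex_Icc 0 r₀)
          (hRcont.mono Icc_subset_Ici_self)
        intro x hx
        rw [interior_Icc] at hx
        rw [(hderivR x hx.1).deriv]
        exact hpos x hx.1.le hx.2
      have := hmono ⟨le_refl 0, hr₀nonneg⟩ ⟨hb.le, hbr⟩ hb
      rwa [hR0] at this
    set u := fun s : ℝ => s * R' s with hu
    have humono : MonotoneOn u (Icc (r₀/2) r₀) := by
      apply monotoneOn_of_deriv_nonneg (convex_Icc _ _)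
      · intro x hx
        have hx0 : 0 < x := lt_of_lt_of_le (by positivity) hx.1
        exact (hR'' x hx0).continuousAt.continuousWithinAt
      · intro x hx
        rw [interior_Icc] at hx
        have hx0 : 0 < x := lt_trans (by positivity) hx.1
        exact (hR'' x hx0).differentiableWithinAt
      · intro x hx
        rw [interior_Icc] at hx
        have hx0 : 0 < x := lt_trans (by positivity) hx.1
        have hd : deriv u x = R x * P x ^ 2 / x := by
          rw [eq_div_iff hx0.ne', mul_comm]
          exact hode x hx0
        rw [hd]
        have hR : 0 < R x := hRpos x hx0 hx.2.le
        positivity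
    have h1 : u (r₀/2) ≤ u r₀ :=
      humono ⟨le_refl _, half_le_self hr₀nonneg⟩
        ⟨half_le_self hr₀nonneg, le_refl _⟩ (half_le_self hr₀nonneg)
    have h2 : 0 < u (r₀/2) := by
      have : 0 < R' (r₀/2) := hpos (r₀/2) (by positivity) (half_lt_self hr₀pos)
      simp only [hu]
      positivity
    have h3 : u r₀ ≤ 0 := mul_nonpos_of_nonneg_of_nonpos hr₀nonneg hr₀S.2
    linarith
  refine ⟨key, ?_⟩
  apply strictMonoOn_of_deriv_pos (convex_Ioi 0) (hRcont.mono Ioi_subset_Ici_self)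
  intro x hx
  rw [interior_Ioi] at hx
  rw [(hderivR x hx).deriv]
  exact key x hx.le
end

section
/- Let R : (0,∞) → ℝ be continuous and let P be twice differentiable on (0,∞) satisfying r·(P'(r)/r)' = R(r)²·P(r) for all r > 0 (equivalently P'' = P'/r + R²P). Suppose at some point a > 0 one has P(a) ≥ 0 and P'(a) > 0. Then for all r > a: P(r) > 0 and P'(r) > 0, and both P and P' are strictly monotonically increasing on (a,∞). -/
/-!
Put `Q = P'/r`, so that the equation reads `Q' = R² P / r` and `P'' = R² P + P'/r`.
As long as `P' > 0` on `[a, b)`, `P` increases from `P a ≥ 0`, hence `Q' ≥ 0` there and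
`P' b = b Q b ≥ b Q a > 0`; so `P'` can never reach `0` after `a`. Then `P' > 0` and `P > 0`
on `(a, ∞)` make both derivatives `P'` and `P''` positive.
-/

open Set

theorem hasDerivAt_of_hasDerivAt_div_id {f : ℝ → ℝ} {q r : ℝ} (hr : r ≠ 0)
    (hq : HasDerivAt (fun s => f s / s) q r) : HasDerivAt f (f r / r + r * q) r := by
  have hf : (fun s => s * (f s / s)) =ᶠ[nhds r] f := by
    filter_upwards [isOpen_ne.mem_nhds hr] with s hs
    exact mul_div_cancel₀ (f s) hs
  simpa only [one_mul, id] using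
    ((hasDerivAt_id' r).mul hq).congr_of_eventuallyEq hf.symm

section MonotoneOfDeriv

variable {f f' : ℝ → ℝ} {D U : Set ℝ}

theorem strictMonoOn_of_hasDerivAt_pos_of_subset (hD : Convex ℝ D) (hDU : D ⊆ U)
    (hf : ∀ x ∈ U, HasDerivAt f (f' x) x) (hpos : ∀ x ∈ interior D, 0 < f' x) :
    StrictMonoOn f D :=
  strictMonoOn_of_hasDerivWithinAt_pos hD
    (fun x hx => (hf x (hDU hx)).continuousAt.continuousWithinAt)
    (fun x hx => (hf x (hDU (interior_subset hx))).hasDerivWithinAt) hpos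

theorem monotoneOn_of_hasDerivAt_nonneg_of_subset (hD : Convex ℝ D) (hDU : D ⊆ U)
    (hf : ∀ x ∈ U, HasDerivAt f (f' x) x) (hnonneg : ∀ x ∈ interior D, 0 ≤ f' x) :
    MonotoneOn f D :=
  monotoneOn_of_hasDerivWithinAt_nonneg hD
    (fun x hx => (hf x (hDU hx)).continuousAt.continuousWithinAt)
    (fun x hx => (hf x (hDU (interior_subset hx))).hasDerivWithinAt) hnonneg

end MonotoneOfDeriv

theorem pos_of_ge_of_continuousOn {f : ℝ → ℝ} {a : ℝ} (hf : ContinuousOn f (Ici a))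
    (ha : 0 < f a) (hstep : ∀ b > a, (∀ x ∈ Ico a b, 0 < f x) → 0 < f b) :
    ∀ x ≥ a, 0 < f x := by
  by_contra! hneg
  obtain ⟨x₀, hx₀a, hx₀⟩ := hneg
  set S := Ici a ∩ f ⁻¹' Iic 0
  have hbdd : BddBelow S := ⟨a, fun x hx => hx.1⟩
  have hS : sInf S ∈ S :=
    (hf.preimage_isClosed_of_isClosed isClosed_Ici isClosed_Iic).csInf_mem ⟨x₀, hx₀a, hx₀⟩ hbdd
  have hba : a < sInf S := lt_of_le_of_ne hS.1 fun h => by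
    have := hS.2
    rw [← h] at this
    exact not_le.mpr ha this
  have hpos : ∀ x ∈ Ico a (sInf S), 0 < f x := fun x hx =>
    not_le.mp fun hfx => not_le.mpr hx.2 (csInf_le hbdd ⟨hx.1, hfx⟩)
  exact not_le.mpr (hstep _ hba hpos) hS.2

section PEquation

variable {R P P' : ℝ → ℝ} {a : ℝ}
  (hP : ∀ r ∈ Ioi (0 : ℝ), HasDerivAt P (P' r) r)
  (hQ : ∀ r ∈ Ioi (0 : ℝ), HasDerivAt (fun s => P' s / s) (R r ^ 2 * P r / r) r)
include hP hQ

theorem pos_deriv_of_pos_deriv_on_Ico (ha : 0 < a) (hPa : 0 ≤ P a) (hP'a : 0 < P' a)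
    {b : ℝ} (hab : a < b) (hP'pos : ∀ x ∈ Ico a b, 0 < P' x) : 0 < P' b := by
  have hsub : Icc a b ⊆ Ioi 0 := fun x hx => ha.trans_le hx.1
  have hPmono : MonotoneOn P (Icc a b) :=
    monotoneOn_of_hasDerivAt_nonneg_of_subset (convex_Icc a b) hsub hP fun x hx => by
      rw [interior_Icc] at hx
      exact (hP'pos x (Ioo_subset_Ico_self hx)).le
  have hQmono : MonotoneOn (fun s => P' s / s) (Icc a b) :=
    monotoneOn_of_hasDerivAt_nonneg_of_subset (convex_Icc a b) hsub hQ fun x hx => by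
      rw [interior_Icc] at hx
      have : 0 ≤ P x := hPa.trans (hPmono (left_mem_Icc.mpr hab.le) (Ioo_subset_Icc_self hx) hx.1.le)
      have := ha.trans hx.1
      positivity
  have hQb : P' a / a ≤ P' b / b :=
    hQmono (left_mem_Icc.mpr hab.le) (right_mem_Icc.mpr hab.le) hab.le
  have hb : 0 < b := ha.trans hab
  have : 0 < P' b / b := (div_pos hP'a ha).trans_le hQb
  exact (div_pos_iff_of_pos_right hb).mp this

theorem pos_deriv_of_ge (ha : 0 < a) (hPa : 0 ≤ P a) (hP'a : 0 < P' a) :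
    ∀ r ≥ a, 0 < P' r := by
  have hP'cont : ContinuousOn P' (Ici a) := fun r hr =>
    (hasDerivAt_of_hasDerivAt_div_id (ha.trans_le hr).ne'
      (hQ r (ha.trans_le hr))).continuousAt.continuousWithinAt
  exact pos_of_ge_of_continuousOn hP'cont hP'a fun b hab =>
    pos_deriv_of_pos_deriv_on_Ico hP hQ ha hPa hP'a hab

end PEquation

theorem stmt_2_general (R P P' : ℝ → ℝ) (a : ℝ) (ha : 0 < a)
    (hPderiv : ∀ r ∈ Ioi (0 : ℝ), HasDerivAt P (P' r) r)
    (hP'' : ∀ r > (0 : ℝ), DifferentiableAt ℝ (fun s => P' s / s) r)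
    (hode : ∀ r > (0 : ℝ), r * deriv (fun s => P' s / s) r = (R r) ^ 2 * P r)
    (hPa : 0 ≤ P a) (hP'a : 0 < P' a) :
    (∀ r > a, 0 < P r ∧ 0 < P' r) ∧
      StrictMonoOn P (Ioi a) ∧ StrictMonoOn P' (Ioi a) := by
  have hQ : ∀ r ∈ Ioi (0 : ℝ), HasDerivAt (fun s => P' s / s) (R r ^ 2 * P r / r) r :=
    fun r (hr : 0 < r) => by
      rw [← hode r hr, mul_div_cancel_left₀ _ hr.ne']
      exact (hP'' r hr).hasDerivAt
  have hP'2 : ∀ r ∈ Ioi (0 : ℝ), HasDerivAt P' (P' r / r + R r ^ 2 * P r) r :=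
    fun r (hr : 0 < r) => by
      simpa only [mul_div_cancel₀ _ hr.ne'] using hasDerivAt_of_hasDerivAt_div_id hr.ne' (hQ r hr)
  have hsub : Ioi a ⊆ Ioi 0 := Ioi_subset_Ioi ha.le
  have hP'pos := pos_deriv_of_ge hPderiv hQ ha hPa hP'a
  have hPmono : StrictMonoOn P (Ici a) :=
    strictMonoOn_of_hasDerivAt_pos_of_subset (convex_Ici a) (Ici_subset_Ioi.mpr ha) hPderiv
      fun x hx => hP'pos x (interior_subset hx)
  have hPpos : ∀ r > a, 0 < P r := fun r hr => hPa.trans_lt (hPmono self_mem_Ici hr.le hr)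
  refine ⟨fun r hr => ⟨hPpos r hr, hP'pos r hr.le⟩, hPmono.mono Ioi_subset_Ici_self, ?_⟩
  refine strictMonoOn_of_hasDerivAt_pos_of_subset (convex_Ioi a) hsub hP'2 fun x hx => ?_
  rw [interior_Ioi] at hx
  have := hP'pos x hx.le
  have := hPpos x hx
  have := ha.trans hx
  positivity

/-- For the flat-space Yang–Mills `P`-equation
`r (P'/r)' = R² P` with a continuous given function `R` on `(0,∞)`: if at
some `a > 0` one has `P a ≥ 0` and `P' a > 0`, then `P` and `P'` are positive
and strictly increasing on `(a,∞)`. -/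
theorem stmt_2 (R P P' : ℝ → ℝ) (a : ℝ) (ha : 0 < a)
    (hRcont : ContinuousOn R (Ioi 0))
    (hPderiv : ∀ r ∈ Ioi (0 : ℝ), HasDerivAt P (P' r) r)
    (hP'' : ∀ r > (0 : ℝ), DifferentiableAt ℝ (fun s => P' s / s) r)
    (hode : ∀ r > (0 : ℝ), r * deriv (fun s => P' s / s) r = (R r) ^ 2 * P r)
    (hPa : 0 ≤ P a) (hP'a : 0 < P' a) :
    (∀ r > a, 0 < P r ∧ 0 < P' r) ∧
      StrictMonoOn P (Ioi a) ∧ StrictMonoOn P' (Ioi a) :=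
  stmt_2_general R P P' a ha hPderiv hP'' hode hPa hP'a
end

section
/- Fix a real q > 0 and an integer k ≥ 1. Suppose (R₁,P₁) and (R₂,P₂) are two pairs of smooth functions on [0,∞) solving the flat-space system r·(r Rᵢ')' = Rᵢ Pᵢ² and r·(Pᵢ'/r)' = Rᵢ² Pᵢ on (0,∞), each satisfying the axis conditions Rᵢ(0) = 0 with Rᵢ^{(j)}(0) = 0 for 0 ≤ j < k and Rᵢ^{(k)}(0) = q, Pᵢ(0) = k, Pᵢ'(0) = 0, and each satisfying Pᵢ(r) > 0 for all r ≥ 0 with Pᵢ(r) → 0 as r → ∞ (heteroclinic trajectory connecting the point (r = 0, R = 0) to the point (1/r = 0, P = 0)). Then P₁''(0) = P₂''(0); i.e., for each pair (q,k) there is at most one value of the axis parameter p = P''(0) admitting such a heteroclinic trajectory. -/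
open Set Filter Topology

section helpers


variable {f : ℝ → ℝ}

lemma diffAt (hf : ContDiffOn ℝ (⊤ : ℕ∞) f (Ici 0)) {r : ℝ} (hr : 0 < r) :
    DifferentiableAt ℝ f r :=
  (hf.contDiffAt (Ici_mem_nhds hr)).differentiableAt (by simp)

lemma deriv_cd (hf : ContDiffOn ℝ (⊤ : ℕ∞) f (Ici 0)) :
    ContDiffOn ℝ 1 (deriv f) (Ioi 0) :=
  (hf.mono Ioi_subset_Ici_self).deriv_of_isOpen isOpen_Ioi (by exact WithTop.coe_le_coe.2 le_top)

lemma deriv_diffAt (hf : ContDiffOn ℝ (⊤ : ℕ∞) f (Ici 0)) {r : ℝ} (hr : 0 < r) :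
    DifferentiableAt ℝ (deriv f) r :=
  ((deriv_cd hf).differentiableOn one_ne_zero r hr).differentiableAt (isOpen_Ioi.mem_nhds hr)

lemma tendsto_f_zero (hf : ContDiffOn ℝ (⊤ : ℕ∞) f (Ici 0)) :
    Tendsto f (𝓝[>] 0) (𝓝 (f 0)) :=
  ((hf.continuousOn 0 self_mem_Ici).tendsto).mono_left
    (nhdsWithin_mono 0 Ioi_subset_Ici_self)

lemma tendsto_deriv_zero (hf : ContDiffOn ℝ (⊤ : ℕ∞) f (Ici 0)) :
    Tendsto (deriv f) (𝓝[>] 0) (𝓝 (derivWithin f (Ici 0) 0)) := by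
  have hD : ContinuousOn (derivWithin f (Ici 0)) (Ici 0) :=
    ((hf.derivWithin (m := 1) (uniqueDiffOn_Ici 0) (by exact WithTop.coe_le_coe.2 le_top)).continuousOn)
  have h1 : Tendsto (derivWithin f (Ici 0)) (𝓝[>] 0) (𝓝 (derivWithin f (Ici 0) 0)) :=
    ((hD 0 self_mem_Ici).tendsto).mono_left (nhdsWithin_mono 0 Ioi_subset_Ici_self)
  refine h1.congr' ?_
  filter_upwards [self_mem_nhdsWithin] with x hx
  exact derivWithin_of_mem_nhds (Ici_mem_nhds hx)

/-- monotone + limit at `0⁺` lemma -/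
lemma lt_on_Ioc_of_strictMonoOn {φ : ℝ → ℝ} {T c : ℝ}
    (hmono : StrictMonoOn φ (Ioc 0 T)) (hlim : Tendsto φ (𝓝[>] 0) (𝓝 c))
    {s : ℝ} (hs : s ∈ Ioc 0 T) : c < φ s := by
  have hs2 : s / 2 ∈ Ioc 0 T := ⟨by linarith [hs.1], by linarith [hs.1, hs.2]⟩
  have hle : c ≤ φ (s / 2) := by
    refine le_of_tendsto hlim ?_
    filter_upwards [Ioo_mem_nhdsGT_of_mem (by constructor <;> [exact le_rfl; linarith [hs.1]] :
      (0:ℝ) ∈ Ico 0 (s/2))] with t ht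
    exact (hmono ⟨ht.1, le_trans (le_of_lt ht.2) hs2.2⟩ hs2 ht.2).le
  exact lt_of_le_of_lt hle (hmono hs2 hs (by linarith [hs.1]))

end helpers


lemma iDW_congr_zero (f : ℝ → ℝ) (n : ℕ) {a : ℝ} (ha : 0 < a) :
    iteratedDerivWithin n f (Icc 0 a) 0 = iteratedDerivWithin n f (Ici 0) 0 := by
  simp only [iteratedDerivWithin]
  rw [iteratedFDerivWithin_congr_set (x := (0:ℝ)) ?_ n]
  rw [Filter.eventuallyEq_set]
  filter_upwards [Iio_mem_nhds ha] with x hx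
  simp only [mem_Icc, mem_Ici]
  exact ⟨fun h => h.1, fun h => ⟨h, hx.le⟩⟩

lemma iDW_congr_mem (f : ℝ → ℝ) (n : ℕ) {a ξ : ℝ} (hξ : ξ ∈ Ioo 0 a) :
    iteratedDerivWithin n f (Icc 0 a) ξ = iteratedDerivWithin n f (Ici 0) ξ := by
  simp only [iteratedDerivWithin]
  rw [iteratedFDerivWithin_congr_set (x := ξ) ?_ n]
  rw [Filter.eventuallyEq_set]
  filter_upwards [Ioo_mem_nhds hξ.1 hξ.2] with x hx
  simp only [mem_Icc, mem_Ici]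
  exact ⟨fun h => h.1, fun h => ⟨h, hx.2.le⟩⟩

lemma taylor_lim {f : ℝ → ℝ} (hf : ContDiffOn ℝ (⊤ : ℕ∞) f (Ici 0)) {n : ℕ} (hn : 1 ≤ n)
    (h0 : ∀ j < n, iteratedDerivWithin j f (Ici 0) 0 = 0) :
    Tendsto (fun s => f s / s ^ n) (𝓝[>] 0)
      (𝓝 (iteratedDerivWithin n f (Ici 0) 0 / (Nat.factorial n : ℝ))) := by
  obtain ⟨m, rfl⟩ : ∃ m, n = m + 1 := ⟨n - 1, (Nat.succ_pred_eq_of_pos hn).symm⟩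
  set g := iteratedDerivWithin (m + 1) f (Ici 0) with hg
  have hgc : ContinuousWithinAt g (Ici 0) 0 :=
    (hf.continuousOn_iteratedDerivWithin (by exact_mod_cast le_top) (uniqueDiffOn_Ici 0)) 0 self_mem_Ici
  rw [Metric.tendsto_nhdsWithin_nhds]
  intro ε hε
  have hfac : (0:ℝ) < ((m+1).factorial : ℝ) := by positivity
  obtain ⟨δ, hδ, hδ'⟩ := Metric.continuousWithinAt_iff.1 hgc (ε * ((m+1).factorial : ℝ))
    (by positivity)
  refine ⟨δ, hδ, fun {s} hs hd => ?_⟩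
  have hs0 : (0:ℝ) < s := hs
  -- Taylor with Lagrange remainder on [0, s]
  have hfm : ContDiffOn ℝ m f (Icc 0 s) := (hf.mono Icc_subset_Ici_self).of_le (by exact_mod_cast le_top)
  have hfd : DifferentiableOn ℝ (iteratedDerivWithin m f (Icc 0 s)) (Ioo 0 s) :=
    ((hf.mono Icc_subset_Ici_self).differentiableOn_iteratedDerivWithin
      (by exact_mod_cast lt_top_iff_ne_top.2 (by simp)) (uniqueDiffOn_Icc hs0)).mono
      Ioo_subset_Icc_self
  obtain ⟨ξ, hξ, heq⟩ := taylor_mean_remainder_lagrange hs0.ne (by rwa [uIcc_of_le hs0.le]) (by rwa [uIcc_of_le hs0.le, uIoo_of_le hs0.le])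
  rw [uIcc_of_le hs0.le] at heq; rw [uIoo_of_le hs0.le] at hξ
  have hT0 : taylorWithinEval f m (Icc 0 s) 0 s = 0 := by
    rw [taylor_within_apply]
    refine Finset.sum_eq_zero fun j hj => ?_
    rw [iDW_congr_zero f j hs0, h0 j (Finset.mem_range.1 hj)]
    simp
  rw [hT0, sub_zero, iDW_congr_mem f (m + 1) hξ, sub_zero] at heq
  have hfs : f s / s ^ (m + 1) = g ξ / ((m+1).factorial : ℝ) := by
    rw [heq]; field_simp; ring
  rw [Real.dist_eq, hfs]
  have : g ξ / ((m+1).factorial:ℝ) - g 0 / ((m+1).factorial:ℝ) = (g ξ - g 0) / ((m+1).factorial:ℝ) := by ring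
  rw [this, abs_div, abs_of_pos hfac, div_lt_iff₀ hfac]
  have hξd : dist ξ 0 < δ := by
    rw [Real.dist_eq, sub_zero, abs_of_pos hξ.1]
    calc ξ < s := hξ.2
    _ = |s - 0| := by rw [sub_zero, abs_of_pos hs0]
    _ < δ := hd
  have := hδ' (mem_Ici.2 hξ.1.le) hξd
  rw [Real.dist_eq] at this
  exact this


lemma slope_lim {P : ℝ → ℝ} (hP : ContDiffOn ℝ (⊤ : ℕ∞) P (Ici 0))
    (hP' : derivWithin P (Ici 0) 0 = 0) :
    Tendsto (fun s => deriv P s / s) (𝓝[>] 0) (𝓝 (iteratedDerivWithin 2 P (Ici 0) 0)) := by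
  set D := derivWithin P (Ici 0) with hD
  have hDon : ContDiffOn ℝ 1 D (Ici 0) := hP.derivWithin (m := 1) (uniqueDiffOn_Ici 0) (by exact WithTop.coe_le_coe.2 le_top)
  have hdiff : DifferentiableWithinAt ℝ D (Ici 0) 0 :=
    (hDon.differentiableOn one_ne_zero) 0 self_mem_Ici
  have h2 : derivWithin D (Ici 0) 0 = iteratedDerivWithin 2 P (Ici 0) 0 := by
    rw [show (2:ℕ) = 1 + 1 from rfl,
      iteratedDerivWithin_succ]
    apply derivWithin_congr
    · intro x hx
      exact (congrFun iteratedDerivWithin_one x).symm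
    · exact (congrFun iteratedDerivWithin_one 0).symm
  have hslope := hdiff.hasDerivWithinAt
  rw [hasDerivWithinAt_iff_tendsto_slope, Ici_sdiff_left] at hslope
  rw [← h2]
  refine Tendsto.congr' ?_ hslope
  filter_upwards [self_mem_nhdsWithin] with s hs
  have hs0 : (0:ℝ) < s := hs
  rw [slope_def_field, hP', sub_zero, sub_zero]
  rw [hD, derivWithin_of_mem_nhds (Ici_mem_nhds hs0)]


/-- derivative of `s ↦ s * deriv R s` from the ODE -/
lemma hasDeriv_h {R P : ℝ → ℝ} (hR : ContDiffOn ℝ (⊤ : ℕ∞) R (Ici 0))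
    (hode : ∀ r > (0:ℝ), r * deriv (fun s => s * deriv R s) r = R r * (P r) ^ 2)
    {r : ℝ} (hr : 0 < r) :
    HasDerivAt (fun s => s * deriv R s) (R r * (P r) ^ 2 / r) r := by
  have hdiff : DifferentiableAt ℝ (fun s => s * deriv R s) r :=
    differentiableAt_fun_id.mul (deriv_diffAt hR hr)
  have h2 := hdiff.hasDerivAt
  have h3 := hode r hr
  have : deriv (fun s => s * deriv R s) r = R r * (P r) ^ 2 / r := by
    field_simp
    linarith
  rwa [this] at h2

/-- derivative of `s ↦ deriv P s / s` from the ODE -/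
lemma hasDeriv_g {R P : ℝ → ℝ} (hP : ContDiffOn ℝ (⊤ : ℕ∞) P (Ici 0))
    (hode : ∀ r > (0:ℝ), r * deriv (fun s => deriv P s / s) r = (R r) ^ 2 * P r)
    {r : ℝ} (hr : 0 < r) :
    HasDerivAt (fun s => deriv P s / s) ((R r) ^ 2 * P r / r) r := by
  have hdiff : DifferentiableAt ℝ (fun s => deriv P s / s) r :=
    (deriv_diffAt hP hr).div differentiableAt_fun_id (ne_of_gt hr)
  have h2 := hdiff.hasDerivAt
  have h3 := hode r hr
  have : deriv (fun s => deriv P s / s) r = (R r) ^ 2 * P r / r := by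
    field_simp
    linarith
  rwa [this] at h2

/-- `R > 0` on `(0, ∞)`. -/
lemma Rpos {q : ℝ} (hq : 0 < q) {k : ℕ} (hk : 1 ≤ k) {R P : ℝ → ℝ}
    (hR : ContDiffOn ℝ (⊤ : ℕ∞) R (Ici 0))
    (hode : ∀ r > (0:ℝ), r * deriv (fun s => s * deriv R s) r = R r * (P r) ^ 2)
    (hax : ∀ j < k, iteratedDerivWithin j R (Ici 0) 0 = 0)
    (haxk : iteratedDerivWithin k R (Ici 0) 0 = q)
    (hPpos : ∀ r ≥ (0:ℝ), 0 < P r) :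
    ∀ r > (0:ℝ), 0 < R r := by
  have hR0 : R 0 = 0 := by
    have := hax 0 hk
    rwa [iteratedDerivWithin_zero] at this
  -- positivity near 0 via Taylor
  have hlim := taylor_lim hR hk hax
  rw [haxk] at hlim
  have hql : (0:ℝ) < q / (Nat.factorial k : ℝ) := by positivity
  have hev : ∀ᶠ s in 𝓝[>] (0:ℝ), 0 < R s / s ^ k := hlim.eventually (eventually_gt_nhds hql)
  obtain ⟨u, hu, huo⟩ := mem_nhdsGT_iff_exists_Ioo_subset.1 hev
  have hε : ∀ s ∈ Ioo (0:ℝ) u, 0 < R s := by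
    intro s hs
    have := huo hs
    have hsk : (0:ℝ) < s ^ k := pow_pos hs.1 k
    by_contra hneg
    push_neg at hneg
    have : R s / s ^ k ≤ 0 := div_nonpos_of_nonpos_of_nonneg hneg hsk.le
    simp only [Set.mem_setOf_eq] at *
    linarith [huo hs]
  -- main step: positivity on (0,T] propagates
  have main : ∀ T : ℝ, 0 < T → (∀ s ∈ Ioo (0:ℝ) T, 0 < R s) → ∀ s ∈ Ioc (0:ℝ) T, 0 < R s := by
    intro T hT hIoo
    have hmono : StrictMonoOn (fun s => s * deriv R s) (Ioc 0 T) := by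
      refine strictMonoOn_of_deriv_pos (convex_Ioc 0 T) ?_ ?_
      · intro x hx
        exact ((hasDeriv_h hR hode hx.1).differentiableAt.continuousAt).continuousWithinAt
      · intro x hx
        rw [interior_Ioc] at hx
        rw [(hasDeriv_h hR hode hx.1).deriv]
        have h1 := hIoo x hx
        have h2 := hPpos x hx.1.le
        have h3 := hx.1
        positivity
    have hlimh : Tendsto (fun s => s * deriv R s) (𝓝[>] 0) (𝓝 0) := by
      have h1 : Tendsto (fun s : ℝ => s) (𝓝[>] (0:ℝ)) (𝓝 0) :=
        tendsto_id.mono_left nhdsWithin_le_nhds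
      have := h1.mul (tendsto_deriv_zero hR)
      simpa using this
    have hpos : ∀ s ∈ Ioc (0:ℝ) T, 0 < s * deriv R s := fun s hs =>
      lt_on_Ioc_of_strictMonoOn hmono hlimh hs
    have hderiv_pos : ∀ s ∈ Ioo (0:ℝ) T, 0 < deriv R s := by
      intro s hs
      have := hpos s ⟨hs.1, hs.2.le⟩
      nlinarith [hs.1]
    have hmonoR : StrictMonoOn R (Ioc 0 T) := by
      refine strictMonoOn_of_deriv_pos (convex_Ioc 0 T) ?_ ?_
      · intro x hx
        exact ((diffAt hR hx.1).continuousAt).continuousWithinAt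
      · intro x hx
        rw [interior_Ioc] at hx
        exact hderiv_pos x hx
    have hlimR : Tendsto R (𝓝[>] 0) (𝓝 0) := by
      have := tendsto_f_zero hR; rwa [hR0] at this
    exact fun s hs => lt_on_Ioc_of_strictMonoOn hmonoR hlimR hs
  -- continuation
  by_contra hbad
  push_neg at hbad
  obtain ⟨r₀, hr₀, hRr₀⟩ := hbad
  set S := {T : ℝ | 0 < T ∧ ∀ s ∈ Ioo (0:ℝ) T, 0 < R s} with hS
  have hu0 : 0 < u := hu
  have hSne : u ∈ S := ⟨hu0, hε⟩
  have hbdd : BddAbove S := by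
    refine ⟨r₀, fun T hT => ?_⟩
    by_contra hc
    push_neg at hc
    exact absurd (hT.2 r₀ ⟨hr₀, hc⟩) (not_lt.2 hRr₀)
  set T₀ := sSup S with hT₀
  have hT₀pos : 0 < T₀ := lt_of_lt_of_le hu0 (le_csSup hbdd hSne)
  have hT₀mem : ∀ s ∈ Ioo (0:ℝ) T₀, 0 < R s := by
    intro s hs
    obtain ⟨T, hTS, hsT⟩ := (lt_csSup_iff hbdd ⟨u, hSne⟩).1 hs.2
    exact main T hTS.1 hTS.2 s ⟨hs.1, hsT.le⟩
  have hRT₀ : 0 < R T₀ := main T₀ hT₀pos hT₀mem T₀ ⟨hT₀pos, le_rfl⟩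
  have hcont : ContinuousAt R T₀ := (diffAt hR hT₀pos).continuousAt
  have hev2 : ∀ᶠ x in 𝓝 T₀, 0 < R x := hcont.eventually (eventually_gt_nhds hRT₀)
  obtain ⟨η, hη, hball⟩ := Metric.eventually_nhds_iff.1 hev2
  have hmem2 : T₀ + η / 2 ∈ S := by
    refine ⟨by linarith, fun s hs => ?_⟩
    rcases lt_or_ge s T₀ with h | h
    · exact hT₀mem s ⟨hs.1, h⟩
    · refine hball ?_
      rw [Real.dist_eq, abs_lt]
      constructor <;> [linarith [hs.2]; linarith [hs.2]]
  have := le_csSup hbdd hmem2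
  linarith

/-- Main comparison lemma: strict inequality of the axis parameters is impossible. -/
lemma stmt3_key (q : ℝ) (hq : 0 < q) (k : ℕ) (hk : 1 ≤ k)
    (R₁ P₁ R₂ P₂ : ℝ → ℝ)
    (hR₁ : ContDiffOn ℝ (⊤ : ℕ∞) R₁ (Ici 0)) (hP₁ : ContDiffOn ℝ (⊤ : ℕ∞) P₁ (Ici 0))
    (hR₂ : ContDiffOn ℝ (⊤ : ℕ∞) R₂ (Ici 0)) (hP₂ : ContDiffOn ℝ (⊤ : ℕ∞) P₂ (Ici 0))
    (hode₁R : ∀ r > (0 : ℝ), r * deriv (fun s => s * deriv R₁ s) r = R₁ r * (P₁ r) ^ 2)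
    (hode₁P : ∀ r > (0 : ℝ), r * deriv (fun s => deriv P₁ s / s) r = (R₁ r) ^ 2 * P₁ r)
    (hode₂R : ∀ r > (0 : ℝ), r * deriv (fun s => s * deriv R₂ s) r = R₂ r * (P₂ r) ^ 2)
    (hode₂P : ∀ r > (0 : ℝ), r * deriv (fun s => deriv P₂ s / s) r = (R₂ r) ^ 2 * P₂ r)
    (haxR₁ : ∀ j < k, iteratedDerivWithin j R₁ (Ici 0) 0 = 0)
    (haxR₁k : iteratedDerivWithin k R₁ (Ici 0) 0 = q)
    (haxR₂ : ∀ j < k, iteratedDerivWithin j R₂ (Ici 0) 0 = 0)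
    (haxR₂k : iteratedDerivWithin k R₂ (Ici 0) 0 = q)
    (haxP₁ : P₁ 0 = k) (haxP₁' : derivWithin P₁ (Ici 0) 0 = 0)
    (haxP₂ : P₂ 0 = k) (haxP₂' : derivWithin P₂ (Ici 0) 0 = 0)
    (hpos₁ : ∀ r ≥ (0 : ℝ), 0 < P₁ r) (hpos₂ : ∀ r ≥ (0 : ℝ), 0 < P₂ r)
    (hlim₁ : Tendsto P₁ atTop (nhds 0)) (hlim₂ : Tendsto P₂ atTop (nhds 0))
    (hlt : iteratedDerivWithin 2 P₁ (Ici 0) 0 < iteratedDerivWithin 2 P₂ (Ici 0) 0) :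
    False := by
  have hR₁pos : ∀ r > (0:ℝ), 0 < R₁ r := Rpos hq hk hR₁ hode₁R haxR₁ haxR₁k hpos₁
  have hR₂pos : ∀ r > (0:ℝ), 0 < R₂ r := Rpos hq hk hR₂ hode₂R haxR₂ haxR₂k hpos₂
  set Δ : ℝ := iteratedDerivWithin 2 P₂ (Ici 0) 0 - iteratedDerivWithin 2 P₁ (Ici 0) 0 with hΔdef
  clear_value Δ
  have hΔ : 0 < Δ := hΔdef ▸ sub_pos.2 hlt
  have hUlim : Tendsto (fun s => deriv P₂ s / s - deriv P₁ s / s) (𝓝[>] 0) (𝓝 Δ) :=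
    hΔdef ▸ (slope_lim hP₂ haxP₂').sub (slope_lim hP₁ haxP₁')
  -- Wronskian lemma: δ > 0 on (0,T) implies R₁ < R₂ on (0,T]
  have hrho : ∀ T : ℝ, 0 < T → (∀ s ∈ Ioo (0:ℝ) T, P₁ s < P₂ s) →
      ∀ s ∈ Ioc (0:ℝ) T, R₁ s < R₂ s := by
    intro T hT hδ
    set W : ℝ → ℝ := fun s => R₁ s * (s * deriv R₂ s) - R₂ s * (s * deriv R₁ s) with hWdef
    have hWd : ∀ x ∈ Ioo (0:ℝ) T,
        HasDerivAt W (R₁ x * R₂ x * ((P₂ x)^2 - (P₁ x)^2) / x) x := by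
      intro x hx
      have h1 := ((diffAt hR₁ hx.1).hasDerivAt.fun_mul (hasDeriv_h hR₂ hode₂R hx.1)).fun_sub
        ((diffAt hR₂ hx.1).hasDerivAt.fun_mul (hasDeriv_h hR₁ hode₁R hx.1))
      refine h1.congr_deriv ?_
      have hx0 : x ≠ 0 := ne_of_gt hx.1
      field_simp
      ring
    have hWmono : StrictMonoOn W (Ioc 0 T) := by
      refine strictMonoOn_of_deriv_pos (convex_Ioc 0 T) ?_ ?_
      · intro x hx
        have hdW : DifferentiableAt ℝ W x :=
          ((diffAt hR₁ hx.1).mul (differentiableAt_fun_id.mul (deriv_diffAt hR₂ hx.1))).sub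
            ((diffAt hR₂ hx.1).mul (differentiableAt_fun_id.mul (deriv_diffAt hR₁ hx.1)))
        exact hdW.continuousAt.continuousWithinAt
      · intro x hx
        rw [interior_Ioc] at hx
        rw [(hWd x hx).deriv]
        apply div_pos ?_ hx.1
        have h1 := hR₁pos x hx.1
        have h2 := hR₂pos x hx.1
        have h3 := hδ x hx
        have h4 := hpos₁ x hx.1.le
        have h5 := hpos₂ x hx.1.le
        nlinarith [mul_pos h1 h2, mul_pos (sub_pos.2 h3) (show 0 < P₂ x + P₁ x by linarith)]
    have hWlim : Tendsto W (𝓝[>] 0) (𝓝 0) := by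
      have hid : Tendsto (fun s : ℝ => s) (𝓝[>] (0:ℝ)) (𝓝 0) :=
        tendsto_id.mono_left nhdsWithin_le_nhds
      have hR₁0 : R₁ 0 = 0 := by
        have := haxR₁ 0 hk; rwa [iteratedDerivWithin_zero] at this
      have hR₂0 : R₂ 0 = 0 := by
        have := haxR₂ 0 hk; rwa [iteratedDerivWithin_zero] at this
      have h1 := (tendsto_f_zero hR₁).mul (hid.mul (tendsto_deriv_zero hR₂))
      have h2 := (tendsto_f_zero hR₂).mul (hid.mul (tendsto_deriv_zero hR₁))
      have h3 := h1.sub h2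
      rw [hR₁0, hR₂0] at h3
      simpa using h3
    have hWpos : ∀ s ∈ Ioc (0:ℝ) T, 0 < W s := fun s hs =>
      lt_on_Ioc_of_strictMonoOn hWmono hWlim hs
    set Q : ℝ → ℝ := fun s => R₂ s / R₁ s with hQdef
    have hQmono : StrictMonoOn Q (Ioc 0 T) := by
      refine strictMonoOn_of_deriv_pos (convex_Ioc 0 T) ?_ ?_
      · intro x hx
        exact (((diffAt hR₂ hx.1).div (diffAt hR₁ hx.1)
          (ne_of_gt (hR₁pos x hx.1))).continuousAt).continuousWithinAt
      · intro x hx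
        rw [interior_Ioc] at hx
        rw [((diffAt hR₂ hx.1).hasDerivAt.fun_div (diffAt hR₁ hx.1).hasDerivAt
          (ne_of_gt (hR₁pos x hx.1))).deriv]
        apply div_pos ?_ (pow_pos (hR₁pos x hx.1) 2)
        have hW := hWpos x ⟨hx.1, hx.2.le⟩
        have hnum : deriv R₂ x * R₁ x - R₂ x * deriv R₁ x = W x / x := by
          have hx0 : x ≠ 0 := ne_of_gt hx.1
          rw [hWdef]
          field_simp
        rw [hnum]
        exact div_pos hW hx.1
    have hq' : q / (Nat.factorial k : ℝ) ≠ 0 := by positivity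
    have hL1 := taylor_lim hR₁ hk haxR₁
    rw [haxR₁k] at hL1
    have hL2 := taylor_lim hR₂ hk haxR₂
    rw [haxR₂k] at hL2
    have hdivlim := hL2.div hL1 hq'
    rw [div_self hq'] at hdivlim
    have hQlim : Tendsto Q (𝓝[>] 0) (𝓝 1) := by
      refine Tendsto.congr' ?_ hdivlim
      filter_upwards [self_mem_nhdsWithin] with s hs
      have hs0 : (0:ℝ) < s := hs
      have hRs : R₁ s ≠ 0 := ne_of_gt (hR₁pos s hs0)
      have hsk : (s:ℝ)^k ≠ 0 := ne_of_gt (pow_pos hs0 k)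
      rw [hQdef, Pi.div_apply]
      field_simp
    intro s hs
    have h1 := lt_on_Ioc_of_strictMonoOn hQmono hQlim hs
    have hR1s := hR₁pos s hs.1
    rw [hQdef] at h1
    exact (one_lt_div hR1s).1 h1
  -- growth lemma
  have hgrow : ∀ T : ℝ, 0 < T → (∀ s ∈ Ioo (0:ℝ) T, P₁ s < P₂ s) →
      ∀ s ∈ Ioc (0:ℝ) T, Δ * s^2 / 2 < P₂ s - P₁ s := by
    intro T hT hδ
    have hρ := hrho T hT hδ
    set u : ℝ → ℝ := fun s => deriv P₂ s / s - deriv P₁ s / s with hudef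
    have humono : StrictMonoOn u (Ioc 0 T) := by
      refine strictMonoOn_of_deriv_pos (convex_Ioc 0 T) ?_ ?_
      · intro x hx
        exact ((((deriv_diffAt hP₂ hx.1).div differentiableAt_fun_id (ne_of_gt hx.1)).sub
          ((deriv_diffAt hP₁ hx.1).div differentiableAt_fun_id
            (ne_of_gt hx.1))).continuousAt).continuousWithinAt
      · intro x hx
        rw [interior_Ioc] at hx
        rw [((hasDeriv_g hP₂ hode₂P hx.1).fun_sub (hasDeriv_g hP₁ hode₁P hx.1)).deriv]
        rw [div_sub_div_same]
        apply div_pos ?_ hx.1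
        have h1 := hR₁pos x hx.1
        have h2 := hρ x ⟨hx.1, hx.2.le⟩
        have h3 := hpos₁ x hx.1.le
        have h4 := hδ x hx
        have h5 : 0 < R₂ x := lt_trans h1 h2
        have hsq : R₁ x ^ 2 < R₂ x ^ 2 := by nlinarith
        nlinarith [mul_lt_mul_of_pos_left h4 (pow_pos h5 2), mul_lt_mul_of_pos_right hsq h3]
    have huge : ∀ s ∈ Ioc (0:ℝ) T, Δ < u s := fun s hs =>
      lt_on_Ioc_of_strictMonoOn humono hUlim hs
    set φ : ℝ → ℝ := fun s => (P₂ s - P₁ s) - Δ * s^2/2 with hφdef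
    have hφmono : StrictMonoOn φ (Icc 0 T) := by
      refine strictMonoOn_of_deriv_pos (convex_Icc 0 T) ?_ ?_
      · refine ContinuousOn.sub (ContinuousOn.sub ?_ ?_) ?_
        · exact (hP₂.continuousOn).mono Icc_subset_Ici_self
        · exact (hP₁.continuousOn).mono Icc_subset_Ici_self
        · exact ((by fun_prop : Continuous fun s : ℝ => Δ * s ^ 2 / 2)).continuousOn
      · intro x hx
        rw [interior_Icc] at hx
        have hd2 : HasDerivAt φ ((deriv P₂ x - deriv P₁ x) - Δ * x) x := by
          have ha := ((diffAt hP₂ hx.1).hasDerivAt).fun_sub ((diffAt hP₁ hx.1).hasDerivAt)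
          have hb : HasDerivAt (fun s : ℝ => Δ * s^2/2) (Δ * x) x := by
            have := ((hasDerivAt_pow 2 x).const_mul Δ).div_const 2
            refine this.congr_deriv ?_
            ring
          exact ha.fun_sub hb
        rw [hd2.deriv]
        have hu := huge x ⟨hx.1, hx.2.le⟩
        have hux : deriv P₂ x - deriv P₁ x = u x * x := by
          have hx0 : x ≠ 0 := ne_of_gt hx.1
          rw [hudef]
          field_simp
        rw [hux]
        nlinarith [hx.1]
    have hφ0 : φ 0 = 0 := by
      rw [hφdef]
      simp [haxP₁, haxP₂]
    intro s hs
    have h1 := hφmono (left_mem_Icc.2 hT.le) ⟨hs.1.le, hs.2⟩ hs.1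
    rw [hφ0] at h1
    rw [hφdef] at h1
    simp only at h1
    linarith
  -- continuation set
  set S := {T : ℝ | 0 < T ∧ ∀ s ∈ Ioo (0:ℝ) T, P₁ s < P₂ s} with hSdef
  have hev : ∀ᶠ s in 𝓝[>] (0:ℝ), 0 < deriv P₂ s / s - deriv P₁ s / s :=
    hUlim.eventually (eventually_gt_nhds hΔ)
  obtain ⟨ε, hε, hεo⟩ := mem_nhdsGT_iff_exists_Ioo_subset.1 hev
  have hε0 : (0:ℝ) < ε := hε
  have hSne : ε ∈ S := by
    refine ⟨hε0, ?_⟩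
    have hδmono : StrictMonoOn (fun s => P₂ s - P₁ s) (Icc 0 ε) := by
      refine strictMonoOn_of_deriv_pos (convex_Icc 0 ε)
        (((hP₂.continuousOn).mono Icc_subset_Ici_self).sub
          ((hP₁.continuousOn).mono Icc_subset_Ici_self)) ?_
      intro x hx
      rw [interior_Icc] at hx
      rw [deriv_fun_sub (diffAt hP₂ hx.1) (diffAt hP₁ hx.1)]
      have h1 := hεo hx
      simp only [Set.mem_setOf_eq] at h1
      rw [div_sub_div_same] at h1
      have h2 := mul_pos h1 hx.1
      rwa [div_mul_cancel₀ _ (ne_of_gt hx.1)] at h2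
    intro s hs
    have h1 := hδmono (left_mem_Icc.2 hε0.le) ⟨hs.1.le, hs.2.le⟩ hs.1
    simp only [haxP₁, haxP₂, sub_self] at h1
    linarith
  have hnb : ¬ BddAbove S := by
    intro hbdd
    set T₀ := sSup S with hT₀def
    have hT₀pos : 0 < T₀ := lt_of_lt_of_le hε0 (le_csSup hbdd hSne)
    have hIoo : ∀ s ∈ Ioo (0:ℝ) T₀, P₁ s < P₂ s := by
      intro s hs
      obtain ⟨T, hTS, hsT⟩ := (lt_csSup_iff hbdd ⟨ε, hSne⟩).1 hs.2
      have := hgrow T hTS.1 hTS.2 s ⟨hs.1, hsT.le⟩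
      nlinarith [hs.1]
    have hT₀δ := hgrow T₀ hT₀pos hIoo T₀ ⟨hT₀pos, le_rfl⟩
    have hδpos : 0 < P₂ T₀ - P₁ T₀ := by nlinarith
    have hcont : ContinuousAt (fun s => P₂ s - P₁ s) T₀ :=
      ((diffAt hP₂ hT₀pos).sub (diffAt hP₁ hT₀pos)).continuousAt
    have hev2 : ∀ᶠ x in 𝓝 T₀, 0 < P₂ x - P₁ x :=
      hcont.eventually (eventually_gt_nhds hδpos)
    obtain ⟨η, hη, hball⟩ := Metric.eventually_nhds_iff.1 hev2
    have hmem2 : T₀ + η/2 ∈ S := by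
      refine ⟨by linarith, fun s hs => ?_⟩
      rcases lt_or_ge s T₀ with h | h
      · exact hIoo s ⟨hs.1, h⟩
      · have hd : dist s T₀ < η := by
          rw [Real.dist_eq, abs_lt]
          constructor
          · linarith [hs.2]
          · linarith [hs.2]
        have := hball hd
        linarith
    have := le_csSup hbdd hmem2
    linarith
  rw [not_bddAbove_iff] at hnb
  have hδlim : Tendsto (fun r => P₂ r - P₁ r) atTop (𝓝 0) := by
    have := hlim₂.sub hlim₁
    simpa using this
  have hev3 : ∀ᶠ r in atTop, P₂ r - P₁ r < 1 := hδlim.eventually (eventually_lt_nhds one_pos)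
  obtain ⟨B, hB⟩ := Filter.eventually_atTop.1 hev3
  obtain ⟨T, hTS, hT⟩ := hnb (max B (Real.sqrt (2/Δ)))
  have hTpos : 0 < T := hTS.1
  have h1 : P₂ T - P₁ T < 1 := hB T (le_of_lt (lt_of_le_of_lt (le_max_left _ _) hT))
  have h2 := hgrow T hTS.1 hTS.2 T ⟨hTpos, le_rfl⟩
  have hsq : Real.sqrt (2/Δ) < T := lt_of_le_of_lt (le_max_right _ _) hT
  have h2Δ : (0:ℝ) ≤ 2/Δ := by positivity
  have hT2 : 2/Δ < T^2 := by
    calc 2/Δ = Real.sqrt (2/Δ) ^ 2 := (Real.sq_sqrt h2Δ).symm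
    _ < T ^ 2 := by
      rw [pow_two, pow_two]
      exact mul_self_lt_mul_self (Real.sqrt_nonneg _) hsq
  have h3 : 1 < Δ*T^2/2 := by
    rw [div_lt_iff₀ hΔ, mul_comm] at hT2
    linarith
  linarith

/-- Uniqueness of the bifurcation parameter `p = P''(0)`:
two smooth solutions of the flat-space system `r (r R')' = R P²`,
`r (P'/r)' = R² P` on `(0,∞)` with the same axis data
`R⁽ʲ⁾(0) = 0` for `0 ≤ j < k`, `R⁽ᵏ⁾(0) = q > 0`, `P(0) = k`, `P'(0) = 0`,
which both stay positive (`P > 0` on `[0,∞)`) and decay (`P → 0` at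
infinity), must have the same second derivative of `P` at the axis. -/
theorem stmt_3 (q : ℝ) (hq : 0 < q) (k : ℕ) (hk : 1 ≤ k)
    (R₁ P₁ R₂ P₂ : ℝ → ℝ)
    (hR₁ : ContDiffOn ℝ (⊤ : ℕ∞) R₁ (Ici 0)) (hP₁ : ContDiffOn ℝ (⊤ : ℕ∞) P₁ (Ici 0))
    (hR₂ : ContDiffOn ℝ (⊤ : ℕ∞) R₂ (Ici 0)) (hP₂ : ContDiffOn ℝ (⊤ : ℕ∞) P₂ (Ici 0))
    (hode₁R : ∀ r > (0 : ℝ), r * deriv (fun s => s * deriv R₁ s) r = R₁ r * (P₁ r) ^ 2)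
    (hode₁P : ∀ r > (0 : ℝ), r * deriv (fun s => deriv P₁ s / s) r = (R₁ r) ^ 2 * P₁ r)
    (hode₂R : ∀ r > (0 : ℝ), r * deriv (fun s => s * deriv R₂ s) r = R₂ r * (P₂ r) ^ 2)
    (hode₂P : ∀ r > (0 : ℝ), r * deriv (fun s => deriv P₂ s / s) r = (R₂ r) ^ 2 * P₂ r)
    (haxR₁ : ∀ j < k, iteratedDerivWithin j R₁ (Ici 0) 0 = 0)
    (haxR₁k : iteratedDerivWithin k R₁ (Ici 0) 0 = q)
    (haxR₂ : ∀ j < k, iteratedDerivWithin j R₂ (Ici 0) 0 = 0)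
    (haxR₂k : iteratedDerivWithin k R₂ (Ici 0) 0 = q)
    (haxP₁ : P₁ 0 = k) (haxP₁' : derivWithin P₁ (Ici 0) 0 = 0)
    (haxP₂ : P₂ 0 = k) (haxP₂' : derivWithin P₂ (Ici 0) 0 = 0)
    (hpos₁ : ∀ r ≥ (0 : ℝ), 0 < P₁ r) (hpos₂ : ∀ r ≥ (0 : ℝ), 0 < P₂ r)
    (hlim₁ : Tendsto P₁ atTop (nhds 0)) (hlim₂ : Tendsto P₂ atTop (nhds 0)) :
    iteratedDerivWithin 2 P₁ (Ici 0) 0 = iteratedDerivWithin 2 P₂ (Ici 0) 0 := by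
  rcases lt_trichotomy (iteratedDerivWithin 2 P₁ (Ici 0) 0) (iteratedDerivWithin 2 P₂ (Ici 0) 0) with h | h | h
  · exact absurd h (by
      intro h
      exact stmt3_key q hq k hk R₁ P₁ R₂ P₂ hR₁ hP₁ hR₂ hP₂ hode₁R hode₁P hode₂R hode₂P
        haxR₁ haxR₁k haxR₂ haxR₂k haxP₁ haxP₁' haxP₂ haxP₂' hpos₁ hpos₂ hlim₁ hlim₂ h)
  · exact h
  · exact absurd h (by
      intro h
      exact stmt3_key q hq k hk R₂ P₂ R₁ P₁ hR₂ hP₂ hR₁ hP₁ hode₂R hode₂P hode₁R hode₁P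
        haxR₂ haxR₂k haxR₁ haxR₁k haxP₂ haxP₂' haxP₁ haxP₁' hpos₂ hpos₁ hlim₂ hlim₁ h)
end

section
/- Let (N, L, K, R, P) be twice differentiable real functions on an open interval I ⊂ (0,∞) with N, L, K positive, satisfying the full static cylindrically symmetric Einstein–Yang–Mills ODE system. Then the Noether charge Q₁(r) = (1/2)·N L K·(N'/N − L'/L − 2 P P'/L²) has vanishing derivative on I, i.e. Q₁ is constant along every solution. -/
/-!
On the open set where `N` and `L` do not vanish, `Q₁` equals the flux
`½ (N' L K − N L' K − 2 (N K / L) P' P)`, built from three of the quantities whose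
derivatives the field equations prescribe. Differentiating it, the `P'²` and `P² R²`
source terms of the first two Einstein equations cancel exactly against the
derivative of `(N K / L) P' P` supplied by the Yang–Mills equation for `P`.
-/

open Set Filter Topology

/-- The full static cylindrically symmetric Einstein–Yang–Mills ODE system in
the Kasner gauge, for five radial functions `N, L, K` (metric) and `R, P`
(Yang–Mills), stated on a set `I`. -/
def EYMSystem (N L K R P : ℝ → ℝ) (I : Set ℝ) : Prop :=
  ∀ r ∈ I,
    deriv (fun s => deriv N s * L s * K s) r =
      N r * L r * K r *
        ((deriv P r) ^ 2 / (L r) ^ 2 + (deriv R r) ^ 2 / (K r) ^ 2 +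
          (P r) ^ 2 * (R r) ^ 2 / ((L r) ^ 2 * (K r) ^ 2)) ∧
    deriv (fun s => N s * deriv L s * K s) r =
      N r * L r * K r *
        (-(deriv P r) ^ 2 / (L r) ^ 2 + (deriv R r) ^ 2 / (K r) ^ 2 -
          (P r) ^ 2 * (R r) ^ 2 / ((L r) ^ 2 * (K r) ^ 2)) ∧
    deriv (fun s => N s * L s * deriv K s) r =
      N r * L r * K r *
        ((deriv P r) ^ 2 / (L r) ^ 2 - (deriv R r) ^ 2 / (K r) ^ 2 -
          (P r) ^ 2 * (R r) ^ 2 / ((L r) ^ 2 * (K r) ^ 2)) ∧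
    deriv (fun s => N s * L s / K s * deriv R s) r =
      N r / (L r * K r) * (R r * (P r) ^ 2) ∧
    deriv (fun s => N s * K s / L s * deriv P s) r =
      N r / (L r * K r) * (P r * (R r) ^ 2)

lemma ContDiffOn.differentiableAt_deriv {𝕜 F : Type*} [NontriviallyNormedField 𝕜]
    [NormedAddCommGroup F] [NormedSpace 𝕜 F] {f : 𝕜 → F} {I : Set 𝕜} {r : 𝕜}
    {n : WithTop ℕ∞} (hf : ContDiffOn 𝕜 n f I) (hn : 2 ≤ n) (hI : IsOpen I)
    (hr : r ∈ I) :
    DifferentiableAt 𝕜 (deriv f) r :=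
  ((hf.deriv_of_isOpen hI (m := 1) hn).differentiableOn one_ne_zero).differentiableAt
    (hI.mem_nhds hr)

noncomputable def noetherFlux (N L K P : ℝ → ℝ) (s : ℝ) : ℝ :=
  (1 / 2) * (deriv N s * L s * K s - N s * deriv L s * K s -
    2 * (N s * K s / L s * deriv P s * P s))

lemma eym_sources_cancel {N L K P P' R R' : ℝ} (hL : L ≠ 0) (hK : K ≠ 0) :
    N * L * K * (P' ^ 2 / L ^ 2 + R' ^ 2 / K ^ 2 + P ^ 2 * R ^ 2 / (L ^ 2 * K ^ 2)) -
        N * L * K * (-P' ^ 2 / L ^ 2 + R' ^ 2 / K ^ 2 - P ^ 2 * R ^ 2 / (L ^ 2 * K ^ 2)) =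
      2 * (N / (L * K) * (P * R ^ 2) * P + N * K / L * P' * P') := by
  field_simp
  ring

section

variable {N L K P : ℝ → ℝ}

lemma noetherCharge_eventuallyEq_noetherFlux {r : ℝ}
    (hN : ∀ᶠ s in 𝓝 r, N s ≠ 0) (hL : ∀ᶠ s in 𝓝 r, L s ≠ 0) :
    (fun s => (1 / 2) * (N s * L s * K s) *
        (deriv N s / N s - deriv L s / L s - 2 * P s * deriv P s / (L s) ^ 2))
      =ᶠ[𝓝 r] noetherFlux N L K P := by
  filter_upwards [hN, hL] with s hNs hLs
  unfold noetherFlux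
  field_simp

lemma hasDerivAt_noetherFlux {r a b c : ℝ}
    (ha : HasDerivAt (fun s => deriv N s * L s * K s) a r)
    (hb : HasDerivAt (fun s => N s * deriv L s * K s) b r)
    (hc : HasDerivAt (fun s => N s * K s / L s * deriv P s) c r)
    (hP : DifferentiableAt ℝ P r) :
    HasDerivAt (noetherFlux N L K P)
      ((1 / 2) * (a - b - 2 * (c * P r + N r * K r / L r * deriv P r * deriv P r))) r :=
  ((ha.sub hb).sub ((hc.mul hP.hasDerivAt).const_mul 2)).const_mul (1 / 2)

end

theorem stmt_6_general (N L K R P : ℝ → ℝ) (I : Set ℝ)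
    (hIopen : IsOpen I)
    (hN : ∀ r ∈ I, 0 < N r) (hL : ∀ r ∈ I, 0 < L r) (hK : ∀ r ∈ I, 0 < K r)
    (hNd : ContDiffOn ℝ 2 N I) (hLd : ContDiffOn ℝ 2 L I)
    (hKd : ContDiffOn ℝ 2 K I)
    (hPd : ContDiffOn ℝ 2 P I)
    (h : EYMSystem N L K R P I) :
    ∀ r ∈ I,
      deriv (fun s =>
        (1 / 2) * (N s * L s * K s) *
          (deriv N s / N s - deriv L s / L s - 2 * P s * deriv P s / (L s) ^ 2)) r
        = 0 := by
  intro r hr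
  have hI : I ∈ 𝓝 r := hIopen.mem_nhds hr
  have hdiff {f : ℝ → ℝ} (hf : ContDiffOn ℝ 2 f I) : DifferentiableAt ℝ f r :=
    (hf.differentiableOn two_ne_zero).differentiableAt hI
  have hdiff' {f : ℝ → ℝ} (hf : ContDiffOn ℝ 2 f I) : DifferentiableAt ℝ (deriv f) r :=
    hf.differentiableAt_deriv le_rfl hIopen hr
  have hLr := (hL r hr).ne'
  have hKr := (hK r hr).ne'
  obtain ⟨hNLK, hNLK', -, -, hNKP⟩ := h r hr
  have ha := hNLK ▸ (((hdiff' hNd).fun_mul (hdiff hLd)).fun_mul (hdiff hKd)).hasDerivAt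
  have hb := hNLK' ▸ (((hdiff hNd).fun_mul (hdiff' hLd)).fun_mul (hdiff hKd)).hasDerivAt
  have hc := hNKP ▸ ((((hdiff hNd).fun_mul (hdiff hKd)).fun_div (hdiff hLd) hLr).fun_mul
    (hdiff' hPd)).hasDerivAt
  rw [(noetherCharge_eventuallyEq_noetherFlux
      (eventually_of_mem hI fun s hs => (hN s hs).ne')
      (eventually_of_mem hI fun s hs => (hL s hs).ne')).deriv_eq,
    (hasDerivAt_noetherFlux ha hb hc (hdiff hPd)).deriv, eym_sources_cancel hLr hKr]
  ring

/-- The Noether charge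
`Q₁ = (1/2) N L K (N'/N − L'/L − 2 P P'/L²)` has vanishing derivative on `I`,
i.e. it is constant along every solution of the EYM system. -/
theorem stmt_6 (N L K R P : ℝ → ℝ) (I : Set ℝ)
    (hIopen : IsOpen I) (hIconn : IsPreconnected I) (hIsub : I ⊆ Ioi 0)
    (hN : ∀ r ∈ I, 0 < N r) (hL : ∀ r ∈ I, 0 < L r) (hK : ∀ r ∈ I, 0 < K r)
    (hNd : ContDiffOn ℝ 2 N I) (hLd : ContDiffOn ℝ 2 L I)
    (hKd : ContDiffOn ℝ 2 K I) (hRd : ContDiffOn ℝ 2 R I)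
    (hPd : ContDiffOn ℝ 2 P I)
    (h : EYMSystem N L K R P I) :
    ∀ r ∈ I,
      deriv (fun s =>
        (1 / 2) * (N s * L s * K s) *
          (deriv N s / N s - deriv L s / L s - 2 * P s * deriv P s / (L s) ^ 2)) r
        = 0 :=
  stmt_6_general N L K R P I hIopen hN hL hK hNd hLd hKd hPd h
end

section
/- Let (N, L, K, R, P) be twice differentiable real functions on an open interval I ⊂ (0,∞) with N, L, K positive, satisfying the full static cylindrically symmetric Einstein–Yang–Mills ODE system. Then the Noether charge Q₂(r) = (1/2)·N L K·(N'/N − K'/K − 2 R R'/K²) has vanishing derivative on I, i.e. Q₂ is constant along every solution. -/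
open Set

/-!
Multiplying out, `Q₂ = ½ (N'LK − NLK' − 2 R · (NL/K) R')` is a combination of the fluxes whose
derivatives are the left-hand sides of the first, third and fourth field equations. The first
minus the third equation gives `(N'LK − NLK')' = 2 NLK (R'²/K² + P²R²/(L²K²))`, and this is
exactly cancelled by `2 (R · (NL/K) R')' = 2 (NL/K) R'² + 2 (N/(LK)) R² P²`.
-/

section Differentiability

variable {f : ℝ → ℝ} {I : Set ℝ} {r : ℝ}

theorem ContDiffOn.differentiableAt_of_isOpen (hI : IsOpen I) (hf : ContDiffOn ℝ 2 f I)
    (hr : r ∈ I) : DifferentiableAt ℝ f r :=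
  (hf.contDiffAt (hI.mem_nhds hr)).differentiableAt two_ne_zero

theorem ContDiffOn.differentiableAt_deriv_of_isOpen (hI : IsOpen I) (hf : ContDiffOn ℝ 2 f I)
    (hr : r ∈ I) : DifferentiableAt ℝ (deriv f) r :=
  ((hf.deriv_of_isOpen hI le_rfl).contDiffAt (hI.mem_nhds hr)).differentiableAt one_ne_zero

end Differentiability

theorem noetherCharge_eq_fluxes {N L K R : ℝ → ℝ} {s : ℝ} (hN : N s ≠ 0) (hK : K s ≠ 0) :
    (1 / 2) * (N s * L s * K s) *
        (deriv N s / N s - deriv K s / K s - 2 * R s * deriv R s / (K s) ^ 2) =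
      (1 / 2) * (deriv N s * L s * K s - N s * L s * deriv K s -
        2 * (R s * (N s * L s / K s * deriv R s))) := by
  field_simp

theorem hasDerivAt_half_sub_sub_two_mul {a b R j : ℝ → ℝ} {a' b' R' j' r : ℝ}
    (ha : HasDerivAt a a' r) (hb : HasDerivAt b b' r) (hR : HasDerivAt R R' r)
    (hj : HasDerivAt j j' r) :
    HasDerivAt (fun s => (1 / 2) * (a s - b s - 2 * (R s * j s)))
      ((1 / 2) * (a' - b' - 2 * (R' * j r + R r * j'))) r :=
  ((ha.sub hb).sub ((hR.mul hj).const_mul 2)).const_mul (1 / 2)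

theorem stmt_7_general (N L K R P : ℝ → ℝ) (I : Set ℝ)
    (hIopen : IsOpen I)
    (hN : ∀ r ∈ I, 0 < N r) (hL : ∀ r ∈ I, 0 < L r) (hK : ∀ r ∈ I, 0 < K r)
    (hNd : ContDiffOn ℝ 2 N I) (hLd : ContDiffOn ℝ 2 L I)
    (hKd : ContDiffOn ℝ 2 K I) (hRd : ContDiffOn ℝ 2 R I)
    (h : EYMSystem N L K R P I) :
    ∀ r ∈ I,
      deriv (fun s =>
        (1 / 2) * (N s * L s * K s) *
          (deriv N s / N s - deriv K s / K s - 2 * R s * deriv R s / (K s) ^ 2)) r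
        = 0 := by
  intro r hr
  have hQ := Filter.eventuallyEq_of_mem (hIopen.mem_nhds hr) fun s hs =>
    noetherCharge_eq_fluxes (L := L) (R := R) (hN s hs).ne' (hK s hs).ne'
  have dN := hNd.differentiableAt_of_isOpen hIopen hr
  have dL := hLd.differentiableAt_of_isOpen hIopen hr
  have dK := hKd.differentiableAt_of_isOpen hIopen hr
  have dR := hRd.differentiableAt_of_isOpen hIopen hr
  have dN' := hNd.differentiableAt_deriv_of_isOpen hIopen hr
  have dK' := hKd.differentiableAt_deriv_of_isOpen hIopen hr
  have dR' := hRd.differentiableAt_deriv_of_isOpen hIopen hr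
  have hK0 := (hK r hr).ne'
  rw [hQ.deriv_eq, (hasDerivAt_half_sub_sub_two_mul ((dN'.fun_mul dL).fun_mul dK).hasDerivAt
    ((dN.fun_mul dL).fun_mul dK').hasDerivAt dR.hasDerivAt
    (((dN.fun_mul dL).fun_div dK hK0).fun_mul dR').hasDerivAt).deriv]
  obtain ⟨hNLK, -, hKLN, hRflux, -⟩ := h r hr
  rw [hNLK, hKLN, hRflux]
  have hL0 := (hL r hr).ne'
  field_simp
  ring

/-- The Noether charge
`Q₂ = (1/2) N L K (N'/N − K'/K − 2 R R'/K²)` has vanishing derivative on `I`,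
i.e. it is constant along every solution of the EYM system. -/
theorem stmt_7 (N L K R P : ℝ → ℝ) (I : Set ℝ)
    (hIopen : IsOpen I) (hIconn : IsPreconnected I) (hIsub : I ⊆ Ioi 0)
    (hN : ∀ r ∈ I, 0 < N r) (hL : ∀ r ∈ I, 0 < L r) (hK : ∀ r ∈ I, 0 < K r)
    (hNd : ContDiffOn ℝ 2 N I) (hLd : ContDiffOn ℝ 2 L I)
    (hKd : ContDiffOn ℝ 2 K I) (hRd : ContDiffOn ℝ 2 R I)
    (hPd : ContDiffOn ℝ 2 P I)
    (h : EYMSystem N L K R P I) :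
    ∀ r ∈ I,
      deriv (fun s =>
        (1 / 2) * (N s * L s * K s) *
          (deriv N s / N s - deriv K s / K s - 2 * R s * deriv R s / (K s) ^ 2)) r
        = 0 :=
  stmt_7_general N L K R P I hIopen hN hL hK hNd hLd hKd hRd h
end

section
/- Let (R, P) be twice differentiable functions solving the flat-space system r·(r R')' = R P² and r·(P'/r)' = R² P on (0,∞). Suppose the limits lim_{r→0⁺} P(r)P'(r)/r = k·p (which holds with k = P(0), p = P''(0) when P extends C²-regularly to 0 with P'(0) = 0) and lim_{r→∞} P(r)P'(r)/r = 0 both exist as stated. Then the improper integral ∫₀^∞ ( P'(r)²/r + R(r)²P(r)²/r ) dr converges and equals −k·p; i.e., with the dimensionless axis magnetic field 𝔹 = −p, the bifurcation condition ∫₀^∞ ( P'²/r + R²P²/r ) dr = k𝔹 holds. -/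
/-!
Along a solution, `P P'/r` has derivative `P'²/r + R²P²/r ≥ 0` on `(0, ∞)`: this is the
second equation `r (P'/r)' = R² P`, multiplied by `P/r` and added to `P'²/r`. A nonnegative
derivative whose primitive has finite limits at both ends of `(0, ∞)` is integrable there,
and its integral is the difference of those limits, here `0 - k p`.
-/

open Set Filter MeasureTheory Topology Function

theorem integrableOn_Ioi_and_integral_eq_of_tendsto_nhdsWithin {f g : ℝ → ℝ} {a l m : ℝ}
    (hderiv : ∀ x ∈ Ioi a, HasDerivAt g (f x) x) (hf : ∀ x ∈ Ioi a, 0 ≤ f x)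
    (hga : Tendsto g (𝓝[>] a) (𝓝 l)) (hgtop : Tendsto g atTop (𝓝 m)) :
    IntegrableOn f (Ioi a) ∧ ∫ x in Ioi a, f x = m - l := by
  set g₀ := update g a l with hg₀
  have hcont : ContinuousWithinAt g₀ (Ici a) a := by
    rwa [continuousWithinAt_update_same, Ici_sdiff_left]
  have hderiv₀ : ∀ x ∈ Ioi a, HasDerivAt g₀ (f x) x := fun x hx =>
    (hderiv x hx).congr_of_eventuallyEq <| eventually_ne_nhds (ne_of_gt hx) |>.mono
      fun y hy => update_of_ne hy ..
  have htop₀ : Tendsto g₀ atTop (𝓝 m) :=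
    hgtop.congr' <| (eventually_ne_atTop a).mono fun y hy => (update_of_ne hy ..).symm
  have hint := integrableOn_Ioi_deriv_of_nonneg hcont hderiv₀ hf htop₀
  refine ⟨hint, ?_⟩
  rw [integral_Ioi_of_hasDerivAt_of_tendsto hcont hderiv₀ hint htop₀, hg₀, update_self]

theorem hasDerivAt_mul_deriv_div_self {P : ℝ → ℝ} {x q : ℝ} (hx : 0 < x)
    (hP : DifferentiableAt ℝ P x) (hPd : DifferentiableAt ℝ (fun s => deriv P s / s) x)
    (hode : x * deriv (fun s => deriv P s / s) x = q * P x) :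
    HasDerivAt (fun s => P s * deriv P s / s) (deriv P x ^ 2 / x + q * P x ^ 2 / x) x := by
  have hPd' : deriv (fun s => deriv P s / s) x = q * P x / x := by
    rw [← hode, mul_div_cancel_left₀ _ hx.ne']
  have hprod : HasDerivAt (fun s => P s * (deriv P s / s))
      (deriv P x * (deriv P x / x) + P x * (q * P x / x)) x :=
    hP.hasDerivAt.mul (hPd' ▸ hPd.hasDerivAt)
  convert hprod using 1
  · simp only [mul_div_assoc]
  · ring

theorem stmt_12_general (R P : ℝ → ℝ) (k p : ℝ)
    (hP : ∀ r > (0 : ℝ), DifferentiableAt ℝ P r)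
    (hPd : ∀ r > (0 : ℝ), DifferentiableAt ℝ (fun s => deriv P s / s) r)
    (hodeP : ∀ r > (0 : ℝ), r * deriv (fun s => deriv P s / s) r = (R r) ^ 2 * P r)
    (hlim0 : Tendsto (fun r => P r * deriv P r / r) (nhdsWithin 0 (Ioi 0))
      (nhds (k * p)))
    (hliminf : Tendsto (fun r => P r * deriv P r / r) atTop (nhds 0)) :
    IntegrableOn (fun r => (deriv P r) ^ 2 / r + (R r) ^ 2 * (P r) ^ 2 / r)
      (Ioi 0) ∧
    ∫ r in Ioi (0 : ℝ), ((deriv P r) ^ 2 / r + (R r) ^ 2 * (P r) ^ 2 / r) =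
      -(k * p) := by
  have hderiv : ∀ r ∈ Ioi (0 : ℝ), HasDerivAt (fun s => P s * deriv P s / s)
      (deriv P r ^ 2 / r + R r ^ 2 * P r ^ 2 / r) r := fun r hr =>
    hasDerivAt_mul_deriv_div_self hr (hP r hr) (hPd r hr) (hodeP r hr)
  have hnonneg : ∀ r ∈ Ioi (0 : ℝ), 0 ≤ deriv P r ^ 2 / r + R r ^ 2 * P r ^ 2 / r :=
    fun r (hr : 0 < r) => by positivity
  simpa using integrableOn_Ioi_and_integral_eq_of_tendsto_nhdsWithin hderiv hnonneg hlim0 hliminf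

/-- The flat-space bifurcation condition: for a solution
`(R, P)` of `r (r R')' = R P²`, `r (P'/r)' = R² P` on `(0,∞)` such that
`P P'/r → k p` as `r → 0⁺` and `P P'/r → 0` as `r → ∞`, the improper
integral `∫₀^∞ (P'²/r + R²P²/r) dr` converges and equals `−k p`, i.e.,
with `𝔹 = −p`, `∫₀^∞ (P'²/r + R²P²/r) dr = k 𝔹`. -/
theorem stmt_12 (R P : ℝ → ℝ) (k p : ℝ)
    (hR : ∀ r > (0 : ℝ), DifferentiableAt ℝ R r)
    (hP : ∀ r > (0 : ℝ), DifferentiableAt ℝ P r)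
    (hRd : ∀ r > (0 : ℝ), DifferentiableAt ℝ (fun s => s * deriv R s) r)
    (hPd : ∀ r > (0 : ℝ), DifferentiableAt ℝ (fun s => deriv P s / s) r)
    (hodeR : ∀ r > (0 : ℝ), r * deriv (fun s => s * deriv R s) r = R r * (P r) ^ 2)
    (hodeP : ∀ r > (0 : ℝ), r * deriv (fun s => deriv P s / s) r = (R r) ^ 2 * P r)
    (hlim0 : Tendsto (fun r => P r * deriv P r / r) (nhdsWithin 0 (Ioi 0))
      (nhds (k * p)))
    (hliminf : Tendsto (fun r => P r * deriv P r / r) atTop (nhds 0)) :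
    IntegrableOn (fun r => (deriv P r) ^ 2 / r + (R r) ^ 2 * (P r) ^ 2 / r)
      (Ioi 0) ∧
    ∫ r in Ioi (0 : ℝ), ((deriv P r) ^ 2 / r + (R r) ^ 2 * (P r) ^ 2 / r) =
      -(k * p) :=
  stmt_12_general R P k p hP hPd hodeP hlim0 hliminf
end
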